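/- arXiv:2012.06779 — 7 statements merged into one kernel-verified Lean document; each statement's English description precedes it below -/
import Mathlib

section
/- The QBF QParity_n is false, and its unique countermodel is the strategy h^z(x_1,…,x_n) = x_1 + ⋯ + x_n mod 2: i.e., h is a winning strategy for the universal player, and any winning strategy must equal h on all assignments. -/
/-- `prefXor x i = x 1 ⊕ x 2 ⊕ ⋯ ⊕ x i` (variables are 1-indexed). -/
def prefXor (x : ℕ → Bool) : ℕ → Bool
  | 0 => false
  | k + 1 => Bool.xor (prefXor x k) (x (k + 1))

/-- Satisfaction of the matrix of QParity_n by an assignment: the parity chain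
t₁ = x₁, tᵢ = tᵢ₋₁ ⊕ xᵢ (2 ≤ i ≤ n), together with tₙ ≠ z
(the clauses (tₙ ∨ z) ∧ (¬tₙ ∨ ¬z)). -/
def QParityMatrixSat (n : ℕ) (x t : ℕ → Bool) (z : Bool) : Prop :=
  t 1 = x 1 ∧
  (∀ i, 2 ≤ i → i ≤ n → t i = Bool.xor (t (i - 1)) (x i)) ∧
  t n ≠ z

/-- A strategy `h` for the universal variable z is a countermodel of QParity_n
if for every assignment to the existential variables x₁,…,xₙ,t₁,…,tₙ, setting
z = h(x) falsifies some clause of the matrix. -/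
def QParityCountermodel (n : ℕ) (h : (ℕ → Bool) → Bool) : Prop :=
  ∀ x t : ℕ → Bool, ¬ QParityMatrixSat n x t (h x)


lemma sat_prefXor (n : ℕ) (hn : 1 ≤ n) (x t : ℕ → Bool) (z : Bool)
    (h : QParityMatrixSat n x t z) : t n = prefXor x n := by
  obtain ⟨h1, h2, _⟩ := h
  have key : ∀ i, 1 ≤ i → i ≤ n → t i = prefXor x i := by
    intro i
    induction i with
    | zero => omega
    | succ k ih =>
      intro _ hkn
      rcases Nat.eq_zero_or_pos k with rfl | hk1
      · simpa [prefXor] using h1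
      ·
        have := h2 (k+1) (by omega) hkn
        simp only [Nat.add_sub_cancel] at this
        rw [this, ih hk1 (by omega), prefXor]
  exact key n hn le_rfl

/-- QParity_n is false, and its unique countermodel is
h^z(x₁,…,xₙ) = x₁ + ⋯ + xₙ mod 2. -/
theorem QParity_unique_countermodel (n : ℕ) (hn : 1 ≤ n) :
    QParityCountermodel n (fun x => prefXor x n) ∧
    ∀ h : (ℕ → Bool) → Bool, QParityCountermodel n h →
      ∀ x : ℕ → Bool, h x = prefXor x n := by
  constructor
  · intro x t hsat
    exact hsat.2.2 (sat_prefXor n hn x t _ hsat)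
  · intro h hc x
    by_contra hne
    apply hc x (prefXor x)
    refine ⟨by simp [prefXor], fun i h2 hin => ?_, ?_⟩
    · obtain ⟨j, rfl⟩ : ∃ j, i = j + 1 := ⟨i-1, by omega⟩
      simp [prefXor]
    · intro he; exact hne he.symm
end

section
/- For every countermodel h of the formula CR_n (n ≥ 2), every decision tree computing the function h^z has size at least 2^n; more precisely, every root-to-leaf path in such a decision tree queries at least n of the variables x_{ij}. -/
/-- A decision tree over Boolean variables indexed by `V`. -/
inductive DTree (V : Type) : Type
  | leaf (b : Bool)
  | node (v : V) (t0 t1 : DTree V)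

namespace DTree

def eval {V : Type} : DTree V → (V → Bool) → Bool
  | leaf b, _ => b
  | node v t0 t1, α => if α v then t1.eval α else t0.eval α

def size {V : Type} : DTree V → ℕ
  | leaf _ => 1
  | node _ t0 t1 => 1 + t0.size + t1.size

def Computes {V : Type} (T : DTree V) (f : (V → Bool) → Bool) : Prop :=
  ∀ α, T.eval α = f α

/-- The set of variables queried on the root-to-leaf path followed by `α`. -/
def queried {V : Type} [DecidableEq V] : DTree V → (V → Bool) → Finset V
  | leaf _, _ => ∅
  | node v t0 t1, α => insert v (if α v then t1.queried α else t0.queried α)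

end DTree

/-- `h` is a countermodel for CR_n: for every assignment to the existential
variables x_{ij}, a_i, b_j, setting z = h(x-part) falsifies some matrix clause
among A_{ij} = (x_{ij} ∨ z ∨ a_i), B_{ij} = (¬x_{ij} ∨ ¬z ∨ b_j),
L_A = (¬a_1 ∨ ⋯ ∨ ¬a_n), L_B = (¬b_1 ∨ ⋯ ∨ ¬b_n). -/
def CRCountermodel (n : ℕ) (h : (Fin n × Fin n → Bool) → Bool) : Prop :=
  ∀ (x : Fin n × Fin n → Bool) (a b : Fin n → Bool),
    ¬ ((∀ i j : Fin n, x (i, j) = true ∨ h x = true ∨ a i = true) ∧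
       (∀ i j : Fin n, x (i, j) = false ∨ h x = false ∨ b j = true) ∧
       (∃ i : Fin n, a i = false) ∧ (∃ j : Fin n, b j = false))

namespace DTree

lemma size_pos {V : Type} (T : DTree V) : 1 ≤ T.size := by
  cases T <;> simp [size] <;> omega

lemma congr_of_agree {V : Type} [DecidableEq V] :
    ∀ (T : DTree V) (α β : V → Bool), (∀ v ∈ T.queried α, α v = β v) →
      T.eval α = T.eval β ∧ T.queried α = T.queried β := by
  intro T
  induction T with
  | leaf b => intro α β _; simp [eval, queried]
  | node v t0 t1 ih0 ih1 =>
    intro α β hag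
    have hv : α v = β v := hag v (by simp [queried])
    cases hα : α v with
    | true =>
      have hβ : β v = true := by rw [← hv, hα]
      have hsub : ∀ w ∈ t1.queried α, α w = β w := by
        intro w hw; exact hag w (by simp [queried, hα, hw])
      obtain ⟨he, hq⟩ := ih1 α β hsub
      constructor <;> simp [eval, queried, hα, hβ, he, hq]
    | false =>
      have hβ : β v = false := by rw [← hv, hα]
      have hsub : ∀ w ∈ t0.queried α, α w = β w := by
        intro w hw; exact hag w (by simp [queried, hα, hw])
      obtain ⟨he, hq⟩ := ih0 α β hsub
      constructor <;> simp [eval, queried, hα, hβ, he, hq]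

lemma size_lb {V : Type} [DecidableEq V] :
    ∀ (T : DTree V) (n : ℕ) (s : Finset V) (ρ : V → Option Bool),
      (∀ w, w ∈ s ↔ (ρ w).isSome) →
      (∀ α : V → Bool, (∀ w b, ρ w = some b → α w = b) →
        n ≤ ((T.queried α) \ s).card) →
      2 ^ n ≤ T.size := by
  intro T
  induction T with
  | leaf b =>
    intro n s ρ hinv hH
    have hα : ∀ w b, ρ w = some b → (fun w => (ρ w).getD false) w = b := by
      intro w b hw; simp [hw]
    have := hH _ hα
    simp [queried] at this
    simp [size, this]
  | node v t0 t1 ih0 ih1 =>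
    intro n s ρ hinv hH
    rcases Nat.eq_zero_or_pos n with rfl | hn
    · calc (2:ℕ) ^ 0 = 1 := pow_zero 2
        _ ≤ (node v t0 t1).size := size_pos _
    cases hρv : ρ v with
    | some bv =>
      have hvs : v ∈ s := by rw [hinv, hρv]; rfl
      cases bv with
      | true =>
        have : 2 ^ n ≤ t1.size := by
          apply ih1 n s ρ hinv
          intro α hα
          have hαv : α v = true := hα v true hρv
          have := hH α hα
          simp only [queried, hαv, if_true] at this
          have heq : insert v (t1.queried α) \ s = t1.queried α \ s := by
            ext w; simp only [Finset.mem_sdiff, Finset.mem_insert]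
            constructor
            · rintro ⟨(rfl | hw), hws⟩
              · exact absurd hvs hws
              · exact ⟨hw, hws⟩
            · rintro ⟨hw, hws⟩; exact ⟨Or.inr hw, hws⟩
          rwa [heq] at this
        calc 2 ^ n ≤ t1.size := this
          _ ≤ (node v t0 t1).size := by simp only [size]; omega
      | false =>
        have : 2 ^ n ≤ t0.size := by
          apply ih0 n s ρ hinv
          intro α hα
          have hαv : α v = false := hα v false hρv
          have := hH α hα
          simp only [queried, hαv, Bool.false_eq_true, if_false] at this
          have heq : insert v (t0.queried α) \ s = t0.queried α \ s := by
            ext w; simp only [Finset.mem_sdiff, Finset.mem_insert]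
            constructor
            · rintro ⟨(rfl | hw), hws⟩
              · exact absurd hvs hws
              · exact ⟨hw, hws⟩
            · rintro ⟨hw, hws⟩; exact ⟨Or.inr hw, hws⟩
          rwa [heq] at this
        calc 2 ^ n ≤ t0.size := this
          _ ≤ (node v t0 t1).size := by simp only [size]; omega
    | none =>
      have key : ∀ (b : Bool) (t : DTree V),
          (∀ α : V → Bool, α v = b →
            (∀ w c, ρ w = some c → α w = c) →
            n ≤ ((insert v (t.queried α)) \ s).card) →
          (∀ α : V → Bool,
            (∀ w c, (fun w => if w = v then some b else ρ w) w = some c → α w = c) →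
            n - 1 ≤ ((t.queried α) \ insert v s).card) := by
        intro b t hb α hα
        have hαv : α v = b := hα v b (by simp)
        have hαρ : ∀ w c, ρ w = some c → α w = c := by
          intro w c hw
          rcases eq_or_ne w v with rfl | hne
          · rw [hρv] at hw; exact absurd hw (by simp)
          · exact hα w c (by simp [hne, hw])
        have h1 := hb α hαv hαρ
        have hsub : insert v (t.queried α) \ s ⊆ insert v (t.queried α \ insert v s) := by
          intro w hw
          simp only [Finset.mem_sdiff, Finset.mem_insert] at hw ⊢
          rcases hw with ⟨(rfl | hw), hws⟩
          · exact Or.inl rfl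
          · rcases eq_or_ne w v with rfl | hne
            · exact Or.inl rfl
            · exact Or.inr ⟨hw, by simp [hne, hws]⟩
        have h2 : ((insert v (t.queried α)) \ s).card ≤ 1 + (t.queried α \ insert v s).card :=
          le_trans (Finset.card_le_card hsub) (by
            exact le_trans (Finset.card_insert_le _ _) (by omega))
        omega
      have hinv' : ∀ (b : Bool) (w : V),
          w ∈ insert v s ↔ ((fun w => if w = v then some b else ρ w) w).isSome := by
        intro b w
        rcases eq_or_ne w v with rfl | hne
        · simp
        · simp [hne, hinv w]
      have H1 : 2 ^ (n - 1) ≤ t1.size := by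
        apply ih1 (n - 1) (insert v s) _ (hinv' true)
        apply key true t1
        intro α hαv hαρ
        have := hH α hαρ
        simpa only [queried, hαv, if_true] using this
      have H0 : 2 ^ (n - 1) ≤ t0.size := by
        apply ih0 (n - 1) (insert v s) _ (hinv' false)
        apply key false t0
        intro α hαv hαρ
        have := hH α hαρ
        simpa only [queried, hαv, Bool.false_eq_true, if_false] using this
      have hn1 : n - 1 + 1 = n := by omega
      have hpow : 2 ^ (n - 1) * 2 = 2 ^ n := by rw [← pow_succ, hn1]
      simp only [size]; omega

end DTree

lemma row_true {n : ℕ} (hn : 0 < n) {h : (Fin n × Fin n → Bool) → Bool}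
    (hcm : CRCountermodel n h) (x : Fin n × Fin n → Bool) (i : Fin n)
    (hrow : ∀ j, x (i, j) = true) : h x = true := by
  by_contra hf
  rw [Bool.not_eq_true] at hf
  apply hcm x (fun i' => decide (∃ j, x (i', j) = false)) (fun _ => false)
  refine ⟨?_, ?_, ⟨i, ?_⟩, ⟨⟨0, hn⟩, rfl⟩⟩
  · intro i' j
    by_cases hx : x (i', j) = true
    · exact Or.inl hx
    · refine Or.inr (Or.inr ?_)
      simp only [decide_eq_true_eq]
      exact ⟨j, by simpa using hx⟩
  · intro i' j
    exact Or.inr (Or.inl hf)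
  · simp [hrow]

lemma col_false {n : ℕ} (hn : 0 < n) {h : (Fin n × Fin n → Bool) → Bool}
    (hcm : CRCountermodel n h) (x : Fin n × Fin n → Bool) (j : Fin n)
    (hcol : ∀ i, x (i, j) = false) : h x = false := by
  by_contra hf
  rw [Bool.not_eq_false] at hf
  apply hcm x (fun _ => false) (fun j' => decide (∃ i, x (i, j') = true))
  refine ⟨?_, ?_, ⟨⟨0, hn⟩, rfl⟩, ⟨j, ?_⟩⟩
  · intro i' j'
    exact Or.inr (Or.inl hf)
  · intro i' j'
    by_cases hx : x (i', j') = false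
    · exact Or.inl hx
    · refine Or.inr (Or.inr ?_)
      simp only [decide_eq_true_eq]
      exact ⟨i', by simpa using hx⟩
  · simp [hcol]

/-- For every countermodel h of CR_n (n ≥ 2), every decision tree computing
h^z has size at least 2^n; more precisely, every root-to-leaf path in such a
decision tree queries at least n of the variables x_{ij}. -/
theorem CR_countermodel_decision_tree_lb (n : ℕ) (hn : 2 ≤ n)
    (h : (Fin n × Fin n → Bool) → Bool) (hcm : CRCountermodel n h)
    (T : DTree (Fin n × Fin n)) (hT : T.Computes h) :
    2 ^ n ≤ T.size ∧ ∀ α : Fin n × Fin n → Bool, n ≤ (T.queried α).card := by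
  have hn0 : 0 < n := by omega
  have hq : ∀ α : Fin n × Fin n → Bool, n ≤ (T.queried α).card := by
    intro α
    by_contra hlt
    push_neg at hlt
    set Q := T.queried α with hQ
    have hrow : ∃ i : Fin n, ∀ j, (i, j) ∉ Q := by
      have hne : (Q.image Prod.fst) ≠ Finset.univ := by
        intro he
        have h1 : (Q.image Prod.fst).card ≤ Q.card := Finset.card_image_le
        rw [he, Finset.card_univ, Fintype.card_fin] at h1
        omega
      obtain ⟨i, hi⟩ : ∃ i, i ∉ Q.image Prod.fst := by
        by_contra hc; push_neg at hc
        exact hne (Finset.eq_univ_iff_forall.mpr hc)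
      exact ⟨i, fun j hj => hi (Finset.mem_image_of_mem Prod.fst hj)⟩
    have hcol : ∃ j : Fin n, ∀ i, (i, j) ∉ Q := by
      have hne : (Q.image Prod.snd) ≠ Finset.univ := by
        intro he
        have h1 : (Q.image Prod.snd).card ≤ Q.card := Finset.card_image_le
        rw [he, Finset.card_univ, Fintype.card_fin] at h1
        omega
      obtain ⟨j, hj⟩ : ∃ j, j ∉ Q.image Prod.snd := by
        by_contra hc; push_neg at hc
        exact hne (Finset.eq_univ_iff_forall.mpr hc)
      exact ⟨j, fun i hi => hj (Finset.mem_image_of_mem Prod.snd hi)⟩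
    obtain ⟨i₀, hi₀⟩ := hrow
    obtain ⟨j₀, hj₀⟩ := hcol
    set β : Fin n × Fin n → Bool := fun p => if p.1 = i₀ then true else α p with hβ
    set γ : Fin n × Fin n → Bool := fun p => if p.2 = j₀ then false else α p with hγ
    have hagβ : ∀ v ∈ Q, α v = β v := by
      rintro ⟨i, j⟩ hv
      have : i ≠ i₀ := fun he => hi₀ j (he ▸ hv)
      simp [hβ, this]
    have hagγ : ∀ v ∈ Q, α v = γ v := by
      rintro ⟨i, j⟩ hv
      have : j ≠ j₀ := fun he => hj₀ i (he ▸ hv)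
      simp [hγ, this]
    have heβ := (DTree.congr_of_agree T α β hagβ).1
    have heγ := (DTree.congr_of_agree T α γ hagγ).1
    have hβt : h β = true := row_true hn0 hcm β i₀ (fun j => by simp [hβ])
    have hγf : h γ = false := col_false hn0 hcm γ j₀ (fun i => by simp [hγ])
    have : (true : Bool) = false := by
      calc (true : Bool) = h β := hβt.symm
        _ = T.eval β := (hT β).symm
        _ = T.eval α := heβ.symm
        _ = T.eval γ := heγ
        _ = h γ := hT γ
        _ = false := hγf
    exact Bool.noConfusion this
  refine ⟨?_, hq⟩
  apply DTree.size_lb T n ∅ (fun _ => none)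
  · intro w; simp
  · intro α _
    simpa using hq α
end

section
/- For every countermodel h of CR_n (n ≥ 2) and every row index k and column index ℓ in [n], the function h^z depends on at least one variable in {x_{kj} : j ∈ [n]} ∪ {x_{iℓ} : i ∈ [n]}: there is no pair of assignments agreeing outside row k and column ℓ on which h^z could be determined without querying row k or column ℓ. Formally: there exist two assignments α_0, α_1 to the x-variables differing only on x_{kℓ} such that h^z(α_0) ≠ h^z(α_1) would be forced, i.e., if h^z(α_0) = h^z(α_1) then h is not a countermodel. -/
/-- For every countermodel h of CR_n (n ≥ 2) and all k, ℓ ∈ [n]: with σ the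
x-assignment setting x_{kj} = 1 (j ≠ ℓ), x_{iℓ} = 0 (i ≠ k), and arbitrary
values elsewhere, and α_c extending σ by x_{kℓ} = c, we must have
h^z(α₀) ≠ h^z(α₁); i.e. if h^z(α₀) = h^z(α₁) then h is not a countermodel. -/
theorem CR_countermodel_must_distinguish (n : ℕ) (hn : 2 ≤ n) (k ℓ : Fin n)
    (h : (Fin n × Fin n → Bool) → Bool) (hcm : CRCountermodel n h)
    (x : Fin n × Fin n → Bool)
    (hrow : ∀ j : Fin n, j ≠ ℓ → x (k, j) = true)
    (hcol : ∀ i : Fin n, i ≠ k → x (i, ℓ) = false) :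
    h (Function.update x (k, ℓ) false) ≠ h (Function.update x (k, ℓ) true) := by
  intro heq
  set α0 := Function.update x (k, ℓ) false with hα0
  set α1 := Function.update x (k, ℓ) true with hα1
  set a : Fin n → Bool := fun i => decide (i ≠ k) with ha
  set b : Fin n → Bool := fun j => decide (j ≠ ℓ) with hb
  -- h α0 = false
  have h0 : h α0 = false := by
    by_contra hne
    have h0t : h α0 = true := by
      cases hv : h α0 with
      | false => exact absurd hv hne
      | true => rfl
    apply hcm α0 a b
    refine ⟨fun i j => Or.inr (Or.inl h0t), ?_, ⟨k, by simp [ha]⟩, ⟨ℓ, by simp [hb]⟩⟩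
    intro i j
    by_cases hj : j = ℓ
    · subst hj
      left
      by_cases hi : i = k
      · subst hi; simp [hα0]
      · rw [hα0, Function.update_of_ne (by simp [hi])]
        exact hcol i hi
    · right; right; simp [hb, hj]
  have h1 : h α1 = false := heq ▸ h0
  apply hcm α1 a b
  refine ⟨?_, fun i j => Or.inr (Or.inl h1), ⟨k, by simp [ha]⟩, ⟨ℓ, by simp [hb]⟩⟩
  intro i j
  by_cases hi : i = k
  · subst hi
    left
    by_cases hj : j = ℓ
    · subst hj; simp [hα1]
    · rw [hα1, Function.update_of_ne (by simp [hj])]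
      exact hrow j hj
  · right; right; simp [ha, hi]
end

section
/- In the formula KBKF-lq[n], every countermodel h satisfies: for each i ∈ [n], if α is an assignment to d_1,…,d_i and β an assignment to e_1,…,e_i with α(d_j) ≠ β(e_j) for all j ≤ i, then h^{x_i}(α,β) = α(d_i). -/
/-- Some f_j with a ≤ j ≤ n is false (i.e. one of the negative literals
¬f_a, …, ¬f_n is satisfied). -/
def NegFRange (f : ℕ → Bool) (a n : ℕ) : Prop :=
  ∃ j, a ≤ j ∧ j ≤ n ∧ f j = false

/-- Satisfaction of all clauses of the matrix of KBKF-lq[n] (1-indexed):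
A₀, A^d_i, A^e_i (i ∈ [n]), B⁰_i, B¹_i (i ∈ [n]). -/
def KBKFMatrixSat (n : ℕ) (d e x f : ℕ → Bool) : Prop :=
  (d 1 = false ∨ e 1 = false ∨ NegFRange f 1 n) ∧
  (∀ i, 1 ≤ i → i < n →
    (d i = true ∨ x i = true ∨ d (i + 1) = false ∨ e (i + 1) = false ∨ NegFRange f 1 n)) ∧
  (∀ i, 1 ≤ i → i < n →
    (e i = true ∨ x i = false ∨ d (i + 1) = false ∨ e (i + 1) = false ∨ NegFRange f 1 n)) ∧
  (d n = true ∨ x n = true ∨ NegFRange f 1 n) ∧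
  (e n = true ∨ x n = false ∨ NegFRange f 1 n) ∧
  (∀ i, 1 ≤ i → i ≤ n → (x i = true ∨ f i = true ∨ NegFRange f (i + 1) n)) ∧
  (∀ i, 1 ≤ i → i ≤ n → (x i = false ∨ f i = true ∨ NegFRange f (i + 1) n))

/-- A countermodel for KBKF-lq[n]: a family of functions h^{x_i}, each
depending only on d_1,e_1,…,d_i,e_i, such that every assignment to the
existential variables together with the universal response falsifies some
clause of the matrix. -/
def KBKFCountermodel (n : ℕ) (h : ℕ → (ℕ → Bool) → (ℕ → Bool) → Bool) : Prop :=
  (∀ i (d d' e e' : ℕ → Bool), (∀ j, j ≤ i → d j = d' j) → (∀ j, j ≤ i → e j = e' j) →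
      h i d e = h i d' e') ∧
  (∀ d e f : ℕ → Bool, ¬ KBKFMatrixSat n d e (fun i => h i d e) f)

/-- Every countermodel h of KBKF-lq[n] satisfies: for each i ∈ [n], if the
assignments to d_1,…,d_i and e_1,…,e_i are anti-symmetric (d_j ≠ e_j for all
j ≤ i), then h^{x_i} = d_i. -/
theorem KBKF_countermodel_copies_d (n : ℕ)
    (h : ℕ → (ℕ → Bool) → (ℕ → Bool) → Bool)
    (hcm : KBKFCountermodel n h)
    (i : ℕ) (hi1 : 1 ≤ i) (hin : i ≤ n) (d e : ℕ → Bool)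
    (hdiff : ∀ j, 1 ≤ j → j ≤ i → d j ≠ e j) :
    h i d e = d i := by
  obtain ⟨hloc, hfals⟩ := hcm
  by_contra hne
  classical
  set d' : ℕ → Bool := fun j => if j ≤ i then d j else true with hd'def
  set e' : ℕ → Bool := fun j => if j ≤ i then e j else true with he'def
  have hd'eq : ∀ j, j ≤ i → d' j = d j := fun j hj => if_pos hj
  have he'eq : ∀ j, j ≤ i → e' j = e j := fun j hj => if_pos hj
  have hd'gt : ∀ j, i < j → d' j = true := fun j hj => if_neg (Nat.not_le.mpr hj)
  have he'gt : ∀ j, i < j → e' j = true := fun j hj => if_neg (Nat.not_le.mpr hj)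
  have hx : h i d' e' = h i d e :=
    (hloc i d d' e e' (fun j hj => (hd'eq j hj).symm) (fun j hj => (he'eq j hj).symm)).symm
  have hxval : h i d' e' = !(d i) := by
    rw [hx]; revert hne; cases d i <;> cases h i d e <;> simp
  have hnoF : ¬ NegFRange (fun _ => true) 1 n := by
    rintro ⟨j, _, _, hj⟩; simp at hj
  apply hfals d' e' (fun _ => true)
  refine ⟨?_, ?_, ?_, ?_, ?_, ?_, ?_⟩
  · -- A0
    rw [hd'eq 1 hi1, he'eq 1 hi1]
    have h1 := hdiff 1 le_rfl hi1
    cases hb : d 1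
    · exact Or.inl rfl
    · cases hb' : e 1
      · exact Or.inr (Or.inl rfl)
      · exact absurd (hb.trans hb'.symm) h1
  · -- A^d_j for j < n
    intro j hj1 hjn
    rcases lt_trichotomy j i with hji | rfl | hji
    · have hj1i : j + 1 ≤ i := hji
      rw [hd'eq (j+1) hj1i, he'eq (j+1) hj1i]
      have hd := hdiff (j+1) (Nat.le_add_left 1 j) hj1i
      cases hb : d (j+1)
      · exact Or.inr (Or.inr (Or.inl rfl))
      · cases hb' : e (j+1)
        · exact Or.inr (Or.inr (Or.inr (Or.inl rfl)))
        · exact absurd (hb.trans hb'.symm) hd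
    · cases hb : d j
      · refine Or.inr (Or.inl ?_)
        show h j d' e' = true
        rw [hxval, hb]; rfl
      · exact Or.inl (by rw [hd'eq j le_rfl, hb])
    · exact Or.inl (hd'gt j hji)
  · -- A^e_j for j < n
    intro j hj1 hjn
    rcases lt_trichotomy j i with hji | rfl | hji
    · have hj1i : j + 1 ≤ i := hji
      rw [hd'eq (j+1) hj1i, he'eq (j+1) hj1i]
      have hd := hdiff (j+1) (Nat.le_add_left 1 j) hj1i
      cases hb : d (j+1)
      · exact Or.inr (Or.inr (Or.inl rfl))
      · cases hb' : e (j+1)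
        · exact Or.inr (Or.inr (Or.inr (Or.inl rfl)))
        · exact absurd (hb.trans hb'.symm) hd
    · have hd := hdiff j hj1 le_rfl
      cases hb : d j
      · refine Or.inl ?_
        rw [he'eq j le_rfl]
        cases hb' : e j
        · exact absurd (hb.trans hb'.symm) hd
        · rfl
      · refine Or.inr (Or.inl ?_)
        show h j d' e' = false
        rw [hxval, hb]; rfl
    · exact Or.inl (he'gt j hji)
  · -- A^d_n
    rcases eq_or_lt_of_le hin with heq | hiln
    · subst heq
      cases hb : d i
      · refine Or.inr (Or.inl ?_)
        show h i d' e' = true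
        rw [hxval, hb]; rfl
      · exact Or.inl (by rw [hd'eq i le_rfl, hb])
    · exact Or.inl (hd'gt n hiln)
  · -- A^e_n
    rcases eq_or_lt_of_le hin with heq | hiln
    · subst heq
      have hd := hdiff i hi1 le_rfl
      cases hb : d i
      · refine Or.inl ?_
        rw [he'eq i le_rfl]
        cases hb' : e i
        · exact absurd (hb.trans hb'.symm) hd
        · rfl
      · refine Or.inr (Or.inl ?_)
        show h i d' e' = false
        rw [hxval, hb]; rfl
    · exact Or.inl (he'gt n hiln)
  · intro j _ _; exact Or.inr (Or.inl rfl)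
  · intro j _ _; exact Or.inr (Or.inl rfl)
end

section
/- The QBF KBKF-lq[n] is false: there exists a countermodel for KBKF-lq[n]. -/
/-- The QBF KBKF-lq[n] is false: there exists a countermodel. -/
theorem KBKF_is_false (n : ℕ) (hn : 1 ≤ n) :
    ∃ h : ℕ → (ℕ → Bool) → (ℕ → Bool) → Bool, KBKFCountermodel n h := by
  refine ⟨fun i d _ => d i, fun i d d' e e' hd _ => hd i le_rfl, ?_⟩
  rintro d e f ⟨hA0, hAd, hAe, hAdn, hAen, hB0, hB1⟩
  -- all f are true
  have hf : ∀ m j, 1 ≤ j → j ≤ n → n - j < m → f j = true := by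
    intro m
    induction m with
    | zero => intro j _ _ h; omega
    | succ m ih =>
      intro j h1 h2 h3
      have hb0 := hB0 j h1 h2
      have hb1 := hB1 j h1 h2
      have : f j = true ∨ NegFRange f (j + 1) n := by
        cases hdj : d j with
        | true =>
          rcases hb1 with h | h | h
          · exact Bool.noConfusion (hdj.symm.trans (show d j = false from h))
          · exact Or.inl h
          · exact Or.inr h
        | false =>
          rcases hb0 with h | h | h
          · exact Bool.noConfusion (hdj.symm.trans (show d j = true from h))
          · exact Or.inl h
          · exact Or.inr h
      rcases this with h | ⟨j', hj1, hj2, hj3⟩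
      · exact h
      · have := ih j' (by omega) hj2 (by omega)
        rw [this] at hj3; exact Bool.noConfusion hj3
  have hnf : ¬ NegFRange f 1 n := by
    rintro ⟨j, h1, h2, h3⟩
    have := hf n j h1 h2 (by omega)
    rw [this] at h3; exact Bool.noConfusion h3
  -- downward chain: d (n-k) = e (n-k) = true
  have hde : ∀ k, k < n → d (n - k) = true ∧ e (n - k) = true := by
    intro k
    induction k with
    | zero =>
      intro _
      simp only [Nat.sub_zero]
      have hd : d n = true := by
        rcases hAdn with h | h | h
        · exact h
        · exact h
        · exact absurd h hnf
      refine ⟨hd, ?_⟩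
      rcases hAen with h | h | h
      · exact h
      · exact absurd (hd.symm.trans h) Bool.noConfusion
      · exact absurd h hnf
    | succ k ih =>
      intro hk
      have ⟨hd1, he1⟩ := ih (by omega)
      set i := n - (k + 1) with hi
      have h1 : 1 ≤ i := by omega
      have h2 : i < n := by omega
      have h3 : i + 1 = n - k := by omega
      have had := hAd i h1 h2
      have hae := hAe i h1 h2
      rw [h3] at had hae
      have hd : d i = true := by
        rcases had with h | h | h | h | h
        · exact h
        · exact h
        · rw [hd1] at h; exact Bool.noConfusion h
        · rw [he1] at h; exact Bool.noConfusion h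
        · exact absurd h hnf
      refine ⟨hd, ?_⟩
      rcases hae with h | h | h | h | h
      · exact h
      · exact absurd (hd.symm.trans h) Bool.noConfusion
      · rw [hd1] at h; exact Bool.noConfusion h
      · rw [he1] at h; exact Bool.noConfusion h
      · exact absurd h hnf
  have ⟨hd1, he1⟩ := hde (n - 1) (by omega)
  have h11 : n - (n - 1) = 1 := by omega
  rw [h11] at hd1 he1
  rcases hA0 with h | h | h
  · rw [hd1] at h; exact Bool.noConfusion h
  · rw [he1] at h; exact Bool.noConfusion h
  · exact hnf h
end

section
/- If C is a Horn clause over variables f_1,…,f_n containing only literals over {f_1,…,f_n} and C is derivable by resolution from the set of strict Horn clauses B = {B^0_i, B^1_i : i ∈ [n]} of KBKF-lq[n] restricted to existential literals, then C contains exactly one positive literal f_j, no literal over f_i for i < j, and for every i > j either ¬f_i ∈ C or f_i was removed by resolving with a clause containing the positive literal f_i. -/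
/-- A clause over the variables f_1, f_2, … : a finite set of literals
`(j, b)` with `b = true` the positive literal f_j. -/
abbrev FClause := Finset (ℕ × Bool)

/-- The resolventOn of C and D on pivot v: (C \ {v}) ∪ (D \ {¬v}). -/
def resolventOn (C D : FClause) (v : ℕ) : FClause :=
  (C.erase (v, true)) ∪ (D.erase (v, false))

/-- Resolution derivations from an axiom set, recording the set of axioms
used as leaves of the derivation. -/
inductive ResDeriv (Ax : Set FClause) : FClause → Set FClause → Prop
  | ax {C : FClause} : C ∈ Ax → ResDeriv Ax C {C}
  | res {C D : FClause} {U V : Set FClause} {v : ℕ} :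
      ResDeriv Ax C U → ResDeriv Ax D V → (v, true) ∈ C → (v, false) ∈ D →
      ResDeriv Ax (resolventOn C D v) (U ∪ V)

/-- The existential part of the clauses B⁰_i, B¹_i of KBKF-lq[n]:
{f_i, ¬f_{i+1}, …, ¬f_n} (and {f_n} for i = n). -/
def Bclause (n i : ℕ) : FClause :=
  insert (i, true) ((Finset.Icc (i + 1) n).image (fun j => (j, false)))

/-- The existential parts of the B-clauses of KBKF-lq[n]. -/
def Baxioms (n : ℕ) : Set FClause :=
  { C | ∃ i, 1 ≤ i ∧ i ≤ n ∧ C = Bclause n i }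

/-- Strengthened invariant preserved by resolution from the B-clauses. -/
def Good (n : ℕ) (C : FClause) (U : Set FClause) : Prop :=
  ∃ j, 1 ≤ j ∧ j ≤ n ∧ (j, true) ∈ C ∧
    (∀ i b, (i, b) ∈ C → j ≤ i ∧ i ≤ n) ∧
    (∀ i, (i, true) ∈ C → i = j) ∧
    (j, false) ∉ C ∧
    (∃ A ∈ U, (j, true) ∈ A) ∧
    (∀ i, j < i → i ≤ n → (i, false) ∈ C ∨ ∃ D ∈ U, (i, true) ∈ D)

lemma mem_Bclause (n i k : ℕ) (b : Bool) :
    (k, b) ∈ Bclause n i ↔ (k = i ∧ b = true) ∨ (i + 1 ≤ k ∧ k ≤ n ∧ b = false) := by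
  simp only [Bclause, Finset.mem_insert, Finset.mem_image, Finset.mem_Icc, Prod.mk.injEq,
    Prod.ext_iff]
  constructor
  · rintro (⟨h1, h2⟩ | ⟨m, ⟨hm1, hm2⟩, hk, hb⟩)
    · exact Or.inl ⟨h1, h2⟩
    · exact Or.inr ⟨hk ▸ hm1, hk ▸ hm2, hb.symm⟩
  · rintro (⟨h1, h2⟩ | ⟨h1, h2, h3⟩)
    · exact Or.inl ⟨h1, h2⟩
    · exact Or.inr ⟨k, ⟨h1, h2⟩, rfl, h3.symm⟩

lemma good_of_deriv (n : ℕ) (C : FClause) (U : Set FClause)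
    (hder : ResDeriv (Baxioms n) C U) : Good n C U := by
  induction hder with
  | ax h =>
    obtain ⟨i, hi1, hin, rfl⟩ := h
    refine ⟨i, hi1, hin, ?_, ?_, ?_, ?_, ⟨Bclause n i, rfl, ?_⟩, ?_⟩
    · rw [mem_Bclause]; exact Or.inl ⟨rfl, rfl⟩
    · intro k b hk
      rw [mem_Bclause] at hk
      rcases hk with ⟨rfl, _⟩ | ⟨h1, h2, _⟩
      · exact ⟨le_rfl, hin⟩
      · exact ⟨le_of_lt (Nat.lt_of_succ_le h1), h2⟩
    · intro k hk
      rw [mem_Bclause] at hk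
      rcases hk with ⟨rfl, _⟩ | ⟨_, _, h⟩
      · rfl
      · simp at h
    · intro h
      rw [mem_Bclause] at h
      rcases h with ⟨_, h⟩ | ⟨h1, _, _⟩
      · simp at h
      · omega
    · rw [mem_Bclause]; exact Or.inl ⟨rfl, rfl⟩
    · intro k hk hkn
      left; rw [mem_Bclause]; exact Or.inr ⟨hk, hkn, rfl⟩
  | @res C D U V v hC hD hvC hvD ihC ihD =>
    obtain ⟨jC, hjC1, hjCn, hjCmem, hCbd, hCuniq, hCneg, hCax, hClast⟩ := ihC
    obtain ⟨jD, hjD1, hjDn, hjDmem, hDbd, hDuniq, hDneg, hDax, hDlast⟩ := ihD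
    have hv : v = jC := hCuniq v hvC
    have hjDv : jD < v := by
      have h1 : jD ≤ v := (hDbd v false hvD).1
      rcases eq_or_lt_of_le h1 with h | h
      · exact absurd (h ▸ hvD) hDneg
      · exact h
    have memR : ∀ k b, (k, b) ∈ resolventOn C D v ↔
        ((k, b) ∈ C ∧ (k, b) ≠ (v, true)) ∨ ((k, b) ∈ D ∧ (k, b) ≠ (v, false)) := by
      intro k b
      simp only [resolventOn, Finset.mem_union, Finset.mem_erase]
      tauto
    refine ⟨jD, hjD1, hjDn, ?_, ?_, ?_, ?_, ?_, ?_⟩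
    · rw [memR]; right; exact ⟨hjDmem, by simp⟩
    · intro k b hk
      rw [memR] at hk
      rcases hk with ⟨h, _⟩ | ⟨h, _⟩
      · obtain ⟨h1, h2⟩ := hCbd k b h
        exact ⟨le_of_lt (lt_of_lt_of_le hjDv (hv ▸ h1)), h2⟩
      · exact hDbd k b h
    · intro k hk
      rw [memR] at hk
      rcases hk with ⟨h, hne⟩ | ⟨h, _⟩
      · exact (hne (Prod.ext_iff.mpr ⟨(hCuniq k h).trans hv.symm, rfl⟩)).elim
      · exact hDuniq k h
    · intro h
      rw [memR] at h
      rcases h with ⟨h, _⟩ | ⟨h, _⟩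
      · have := (hCbd jD false h).1
        omega
      · exact hDneg h
    · obtain ⟨A, hA, hAm⟩ := hDax
      exact ⟨A, Or.inr hA, hAm⟩
    · intro k hk hkn
      rcases hDlast k hk hkn with h | ⟨A, hA, hAm⟩
      · by_cases hkv : k = v
        · subst hkv
          obtain ⟨A, hA, hAm⟩ := hCax
          exact Or.inr ⟨A, Or.inl hA, hv ▸ hAm⟩
        · left; rw [memR]; right
          exact ⟨h, by simp [Prod.ext_iff, hkv]⟩
      · exact Or.inr ⟨A, Or.inr hA, hAm⟩

/-- If C is a Horn clause over f_1,…,f_n derivable by resolution from the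
(existential parts of the) B-clauses of KBKF-lq[n], then C contains exactly
one positive literal f_j, no literal over f_i for i < j, and for every i > j
either ¬f_i ∈ C or f_i was removed by resolving with a clause whose derivation
uses an axiom containing the positive literal f_i. -/
theorem horn_clause_from_B_structure (n : ℕ) (C : FClause) (U : Set FClause)
    (hder : ResDeriv (Baxioms n) C U)
    (hHorn : (C.filter (fun l => l.2 = true)).card ≤ 1) :
    ∃ j, 1 ≤ j ∧ j ≤ n ∧ (j, true) ∈ C ∧
      (∀ i, (i, true) ∈ C → i = j) ∧
      (∀ i, i < j → (i, true) ∉ C ∧ (i, false) ∉ C) ∧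
      (∀ i, j < i → i ≤ n → (i, false) ∈ C ∨ ∃ D ∈ U, (i, true) ∈ D) := by
  obtain ⟨j, h1, h2, h3, h4, h5, h6, _, h8⟩ := good_of_deriv n C U hder
  refine ⟨j, h1, h2, h3, h5, ?_, h8⟩
  intro i hij
  constructor
  · intro h; exact absurd (h5 i h) (by omega)
  · intro h; have := (h4 i false h).1; omega
end

section
/- If n ≥ 2, then for any k, ℓ ∈ [n], the assignment σ to the variables of CR_n given by: x_{kj} = 1 for j ≠ ℓ, x_{iℓ} = 0 for i ≠ k, arbitrary values on the remaining x-variables, a_k = 0, b_ℓ = 0, and a_i = 1 (i ≠ k), b_j = 1 (j ≠ ℓ), satisfies every clause of the matrix of CR_n except A_{kℓ} and B_{kℓ}, regardless of the value of z and of x_{kℓ}. -/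
/-- If n ≥ 2, the assignment σ to the variables of CR_n given by x_{kj} = 1
for j ≠ ℓ, x_{iℓ} = 0 for i ≠ k, arbitrary values on the remaining
x-variables, a_k = 0, b_ℓ = 0, and a_i = 1 (i ≠ k), b_j = 1 (j ≠ ℓ),
satisfies every clause of the matrix of CR_n except A_{kℓ} and B_{kℓ},
regardless of the value of z and of x_{kℓ}. -/
theorem CR_sigma_satisfies_all_but_one (n : ℕ) (hn : 2 ≤ n) (k ℓ : Fin n)
    (x : Fin n × Fin n → Bool) (a b : Fin n → Bool) (z : Bool)
    (hrow : ∀ j : Fin n, j ≠ ℓ → x (k, j) = true)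
    (hcol : ∀ i : Fin n, i ≠ k → x (i, ℓ) = false)
    (hak : a k = false) (hbl : b ℓ = false)
    (ha : ∀ i : Fin n, i ≠ k → a i = true)
    (hb : ∀ j : Fin n, j ≠ ℓ → b j = true) :
    (∀ i j : Fin n, (i, j) ≠ (k, ℓ) →
        (x (i, j) = true ∨ z = true ∨ a i = true)) ∧
    (∀ i j : Fin n, (i, j) ≠ (k, ℓ) →
        (x (i, j) = false ∨ z = false ∨ b j = true)) ∧
    (∃ i : Fin n, a i = false) ∧ (∃ j : Fin n, b j = false) := by
  refine ⟨?_, ?_, ⟨k, hak⟩, ⟨ℓ, hbl⟩⟩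
  · intro i j hij
    by_cases hik : i = k
    · subst hik
      have hjl : j ≠ ℓ := fun h => hij (by rw [h])
      exact Or.inl (hrow j hjl)
    · exact Or.inr (Or.inr (ha i hik))
  · intro i j hij
    by_cases hjl : j = ℓ
    · subst hjl
      have hik : i ≠ k := fun h => hij (by rw [h])
      exact Or.inl (hcol i hik)
    · exact Or.inr (Or.inr (hb j hjl))
end
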